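/- Let n ≥ 1 and s ∈ ℕ ∪ {0}. There exists a constant C ≥ 1 such that for every ball B = B(c_B, r_B) ⊂ ℝ^n satisfying either (r_B < 1 and |c_B| ≥ 1/r_B) or r_B ≥ 1, one has C^{-1}‖χ_B‖_{L^1_{W_1}} ≤ ‖χ_B‖_{L^{Φ_1}} ≤ C‖χ_B‖_{L^1_{W_1}}; consequently, if a is a (Φ_1,∞,s)-atom associated with such a ball B, then C^{-1}a is a (1,∞,s)_{W_1}-atom associated with the same ball B. -/

import Mathlib

open MeasureTheory Real
open scoped ENNReal Classical

noncomputable section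

/-- `ℝⁿ` as a Euclidean space. -/
abbrev Rn (n : ℕ) := EuclideanSpace ℝ (Fin n)

/-- The Musielak-Orlicz growth function `Φ_p`. -/
def Phi (n : ℕ) (p : ℝ) (x : Rn n) (t : ℝ) : ℝ :=
  if ∃ k : ℕ, (n : ℝ) * (1 / p - 1) = (k : ℝ) then
    t / (Real.log (Real.exp 1 + t) +
      (t * (1 + ‖x‖) ^ (n : ℝ)) ^ (1 - p) * (Real.log (Real.exp 1 + ‖x‖)) ^ p)
  else
    t / (Real.log (Real.exp 1 + t) + (t * (1 + ‖x‖) ^ (n : ℝ)) ^ (1 - p))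

/-- The Orlicz function `φ₀(t) = t / log(e+t)`. -/
def phi0 (t : ℝ) : ℝ := t / Real.log (Real.exp 1 + t)

/-- The weight `W_p`. -/
def Wp (n : ℕ) (p : ℝ) (x : Rn n) : ℝ :=
  if p = 1 then 1 / Real.log (Real.exp 1 + ‖x‖)
  else if ∃ k : ℕ, (n : ℝ) * (1 / p - 1) = (k : ℝ) then
    (1 + ‖x‖) ^ (-(n : ℝ) * (1 - p)) * (Real.log (Real.exp 1 + ‖x‖)) ^ (-p)
  else (1 + ‖x‖) ^ (-(n : ℝ) * (1 - p))

/-- Extension of `Φ_p(x, ·)` to `ℝ≥0∞`. -/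
def PhiE (n : ℕ) (p : ℝ) (x : Rn n) (t : ℝ≥0∞) : ℝ≥0∞ :=
  if t = ⊤ then ⊤ else ENNReal.ofReal (Phi n p x t.toReal)

/-- Extension of `φ₀` to `ℝ≥0∞`. -/
def phi0E (t : ℝ≥0∞) : ℝ≥0∞ :=
  if t = ⊤ then ⊤ else ENNReal.ofReal (phi0 t.toReal)

/-- The Luxemburg quasi-norm `‖·‖_{L^{Φ_p}}`. -/
def luxPhiNorm (n : ℕ) (p : ℝ) (F : Rn n → ℝ≥0∞) : ℝ≥0∞ :=
  sInf {lam : ℝ≥0∞ | 0 < lam ∧ (∫⁻ x : Rn n, PhiE n p x (F x / lam)) ≤ 1}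

/-- The Luxemburg norm `‖·‖_{L^{φ₀}}`. -/
def luxPhi0Norm (n : ℕ) (F : Rn n → ℝ≥0∞) : ℝ≥0∞ :=
  sInf {lam : ℝ≥0∞ | 0 < lam ∧ (∫⁻ x : Rn n, phi0E (F x / lam)) ≤ 1}

/-- The weighted quasi-norm `‖·‖_{L^p_{W_p}}`. -/
def wNorm (n : ℕ) (p : ℝ) (F : Rn n → ℝ≥0∞) : ℝ≥0∞ :=
  (∫⁻ x : Rn n, F x ^ p * ENNReal.ofReal (Wp n p x)) ^ (1 / p)

/-- The weighted norm `‖·‖_{L^1_{W_1}}`. -/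
def w1Norm (n : ℕ) (F : Rn n → ℝ≥0∞) : ℝ≥0∞ :=
  ∫⁻ x : Rn n, F x * ENNReal.ofReal (Wp n 1 x)

/-- The characteristic function of a set, `ℝ≥0∞`-valued. -/
def chi (n : ℕ) (B : Set (Rn n)) : Rn n → ℝ≥0∞ := B.indicator fun _ => 1


/-- An `(X, ∞, s)`-atom associated with the set `B`, where `normB` is `‖χ_B‖_X`:
a measurable function supported in `B`, bounded by `‖χ_B‖_X⁻¹`, with vanishing
moments up to order `s`. -/
def IsAtom' (n s : ℕ) (normB : ℝ≥0∞) (B : Set (Rn n)) (a : Rn n → ℂ) : Prop :=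
  Measurable a ∧ (∀ x, x ∉ B → a x = 0) ∧
  (∀ᵐ x : Rn n, (‖a x‖₊ : ℝ≥0∞) ≤ normB⁻¹) ∧
  ∀ α : Fin n → ℕ, (∑ i, α i) ≤ s →
    (∫ x : Rn n, a x * ∏ i, ((x i : ℝ) : ℂ) ^ (α i)) = 0


/-!
Write `logE t = log (e + t)` and `L x = logE |x|`, so that `‖χ_B‖_{L^1_{W_1}} = ∫_B 1 / L`.
Testing the Luxemburg functional at `λ = ∫_B 1 / L` and dropping `log (e + 1/λ)` from the
denominator of `Φ_1` gives `‖χ_B‖_{L^{Φ_1}} ≤ ‖χ_B‖_{L^1_{W_1}}`.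

Conversely, let `λ` be admissible and `u = 1 / λ`. Bounding `L` on `B` by its maximum
`logE (|c| + r)` yields `u |B| ≤ logE u + logE (|c| + r)`. On the two families of balls this
forces `logE u ≤ K m`, where `m = logE (max (|c| - r) 0)` is the minimum of `L` on `B`: for
`r ≥ 1` because `|B| ≳ r`, for small far balls because `|B| ≳ |c|^{-n}` and `m ≈ log |c|`.
Hence `Φ_1(x, u) ≥ u / ((K + 1) L x)` on `B`, and integrating gives `u ∫_B 1 / L ≤ K + 1`.
The lower bound on `‖χ_B‖_{L^{Φ_1}}` is exactly what rescales the `L^∞` bound of an atom.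
-/

def logE (t : ℝ) : ℝ := Real.log (Real.exp 1 + t)

lemma one_le_logE {t : ℝ} (ht : 0 ≤ t) : 1 ≤ logE t := by
  rw [logE, Real.le_log_iff_exp_le (by positivity)]
  linarith

lemma logE_nonneg {t : ℝ} (ht : 0 ≤ t) : 0 ≤ logE t := zero_le_one.trans (one_le_logE ht)

lemma logE_le_logE {s t : ℝ} (hs : 0 ≤ s) (hst : s ≤ t) : logE s ≤ logE t :=
  Real.log_le_log (by positivity) (by linarith)

lemma logE_le_one_add {t : ℝ} (ht : 0 ≤ t) : logE t ≤ 1 + t := by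
  rw [logE, Real.log_le_iff_le_exp (by positivity), Real.exp_add]
  nlinarith [Real.add_one_le_exp t, Real.add_one_le_exp 1]

lemma logE_add_le {s t : ℝ} (hs : 0 ≤ s) (ht : 0 ≤ t) : logE (s + t) ≤ logE s + logE t := by
  have he : 1 ≤ Real.exp 1 := Real.one_le_exp zero_le_one
  rw [logE, logE, logE, ← Real.log_mul (by positivity) (by positivity)]
  exact Real.log_le_log (by positivity) (by nlinarith)

lemma logE_mul_le {s t : ℝ} (hs : 0 ≤ s) (ht : 0 ≤ t) : logE (s * t) ≤ logE s + logE t := by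
  have he : 1 ≤ Real.exp 1 := Real.one_le_exp zero_le_one
  rw [logE, logE, logE, ← Real.log_mul (by positivity) (by positivity)]
  exact Real.log_le_log (by positivity) (by nlinarith [mul_nonneg hs ht])

lemma logE_pow_le {t : ℝ} (ht : 0 ≤ t) {k : ℕ} (hk : k ≠ 0) : logE (t ^ k) ≤ k * logE t := by
  have he : 1 ≤ Real.exp 1 := Real.one_le_exp zero_le_one
  rw [logE, logE, ← Real.log_pow]
  refine Real.log_le_log (by positivity) ?_
  calc Real.exp 1 + t ^ k ≤ Real.exp 1 ^ k + t ^ k := by gcongr; exact le_self_pow₀ he hk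
    _ ≤ (Real.exp 1 + t) ^ k := pow_add_pow_le (by positivity) ht hk

lemma le_of_mul_le_logE_add {a M u : ℝ} (ha : 0 < a) (hu : 0 ≤ u)
    (h : u * a ≤ logE u + M) : u ≤ Real.exp 1 + 4 / a ^ 2 + 2 * M / a := by
  -- `log y ≤ y - 1` at `y = (e + u) a / 2` and at `y = 2 / a`
  have hsplit : logE u = Real.log ((Real.exp 1 + u) * (a / 2)) + Real.log (2 / a) := by
    rw [logE, ← Real.log_mul (by positivity) (by positivity)]
    congr 1
    field_simp
  have h1 := Real.log_le_sub_one_of_pos (show 0 < (Real.exp 1 + u) * (a / 2) by positivity)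
  have h2 := Real.log_le_sub_one_of_pos (show 0 < 2 / a by positivity)
  have hlin : u * a / 2 ≤ Real.exp 1 * a / 2 + 2 / a + M := by nlinarith
  calc u = u * a / 2 * (2 / a) := by field_simp
    _ ≤ (Real.exp 1 * a / 2 + 2 / a + M) * (2 / a) := by gcongr
    _ = Real.exp 1 + 4 / a ^ 2 + 2 * M / a := by field_simp; ring

lemma logE_le_mul_of_le_mul {K m u : ℝ} (hK : 0 ≤ K) (hm : 1 ≤ m) (hu : 0 ≤ u)
    (h : u ≤ K * m) : logE u ≤ (logE K + 2) * m := by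
  have hK' := logE_nonneg hK
  calc logE u ≤ logE (K * m) := logE_le_logE hu h
    _ ≤ logE K + logE m := logE_mul_le hK (by linarith)
    _ ≤ logE K + (1 + m) := by gcongr; exact logE_le_one_add (by linarith)
    _ ≤ (logE K + 2) * m := by nlinarith

lemma logE_le_of_one_le_radius {n : ℕ} (hn : 1 ≤ n) {v c r u : ℝ} (hv : 0 < v) (hc : 0 ≤ c)
    (hr : 1 ≤ r) (hu : 0 ≤ u) (h : u * (r ^ n * v) ≤ logE u + logE (c + r)) :
    logE u ≤ (logE (Real.exp 1 + 4 / v ^ 2 + 8 / v) + 2) * logE (max (c - r) 0) := by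
  set m := logE (max (c - r) 0)
  have hm : 1 ≤ m := one_le_logE (le_max_right _ _)
  have hrv : r * v ≤ r ^ n * v := by gcongr; exact le_self_pow₀ hr (by omega)
  have hM : logE (c + r) ≤ m + 1 + 2 * r := by
    calc logE (c + r) ≤ logE (max (c - r) 0 + 2 * r) :=
          logE_le_logE (by positivity) (by linarith [le_max_left (c - r) 0])
      _ ≤ m + logE (2 * r) := logE_add_le (le_max_right _ _) (by positivity)
      _ ≤ m + 1 + 2 * r := by linarith [logE_le_one_add (show 0 ≤ 2 * r by positivity)]
  have hu' := le_of_mul_le_logE_add (by positivity) hu h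
  have h4 : 4 / (r ^ n * v) ^ 2 ≤ 4 / v ^ 2 := by gcongr; nlinarith
  have h2M : 2 * logE (c + r) / (r ^ n * v) ≤ 8 / v * m := by
    rw [div_le_iff₀ (by positivity)]
    calc 2 * logE (c + r) ≤ 2 * (m + 1 + 2 * r) := by linarith
      _ ≤ 8 / v * m * (r * v) := by field_simp; nlinarith
      _ ≤ 8 / v * m * (r ^ n * v) := by gcongr
  refine logE_le_mul_of_le_mul (by positivity) hm hu ?_
  have he := Real.exp_pos 1
  have : 4 / v ^ 2 ≤ 4 / v ^ 2 * m := le_mul_of_one_le_right (by positivity) hm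
  nlinarith

lemma le_mul_of_far_small_ball (n : ℕ) {v c r u : ℝ} (hv : 0 < v) (hr : 0 < r) (hr1 : r < 1)
    (hrc : 1 / r ≤ c) (hu : 0 ≤ u) (h : u * (r ^ n * v) ≤ logE u + logE (c + r)) :
    u ≤ (Real.exp 1 + 4 / v ^ 2 + 2 * (1 + logE 2) / v) * (logE (c - r) * c ^ (2 * n)) := by
  set m := logE (c - r)
  have hc : 1 ≤ c := (one_lt_one_div hr hr1).le.trans hrc
  have hm : 1 ≤ m := one_le_logE (by linarith)
  have hl2 := logE_nonneg (zero_le_two (α := ℝ))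
  have hinv : 1 / (r ^ n * v) ≤ c ^ n / v := by
    have hrc' : 1 ≤ r * c := by rwa [div_le_iff₀ hr, mul_comm] at hrc
    rw [div_le_div_iff₀ (by positivity) hv]
    calc 1 * v ≤ (r * c) ^ n * v := by gcongr; exact one_le_pow₀ hrc'
      _ = c ^ n * (r ^ n * v) := by ring
  have hM : logE (c + r) ≤ (1 + logE 2) * m := by
    calc logE (c + r) ≤ logE ((c - r) + 2) := logE_le_logE (by positivity) (by linarith)
      _ ≤ m + logE 2 := logE_add_le (by linarith) zero_le_two
      _ ≤ (1 + logE 2) * m := by nlinarith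
  have h4 : 4 / (r ^ n * v) ^ 2 ≤ 4 / v ^ 2 * c ^ (2 * n) := by
    calc 4 / (r ^ n * v) ^ 2 = 4 * (1 / (r ^ n * v)) ^ 2 := by ring
      _ ≤ 4 * (c ^ n / v) ^ 2 := by gcongr
      _ = 4 / v ^ 2 * c ^ (2 * n) := by ring
  have h2M : 2 * logE (c + r) / (r ^ n * v) ≤ 2 * (1 + logE 2) / v * (m * c ^ n) := by
    calc 2 * logE (c + r) / (r ^ n * v) = 2 * logE (c + r) * (1 / (r ^ n * v)) := by ring
      _ ≤ 2 * ((1 + logE 2) * m) * (c ^ n / v) := by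
        gcongr
      _ = 2 * (1 + logE 2) / v * (m * c ^ n) := by ring
  have hcc : c ^ n ≤ c ^ (2 * n) := pow_le_pow_right₀ hc (by omega)
  have h1 : 1 ≤ m * c ^ (2 * n) := one_le_mul_of_one_le_of_one_le hm (one_le_pow₀ hc)
  calc u ≤ Real.exp 1 + 4 / v ^ 2 * c ^ (2 * n) + 2 * (1 + logE 2) / v * (m * c ^ n) := by
        linarith [le_of_mul_le_logE_add (by positivity) hu h]
    _ ≤ _ := by
        simp only [add_mul]
        gcongr
        · exact le_mul_of_one_le_right (Real.exp_pos 1).le h1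
        · exact le_mul_of_one_le_left (by positivity) hm

lemma logE_le_of_far_small_ball {n : ℕ} (hn : 1 ≤ n) {v c r u : ℝ} (hv : 0 < v) (hr : 0 < r)
    (hr1 : r < 1) (hrc : 1 / r ≤ c) (hu : 0 ≤ u) (h : u * (r ^ n * v) ≤ logE u + logE (c + r)) :
    logE u ≤ (logE (Real.exp 1 + 4 / v ^ 2 + 2 * (1 + logE 2) / v) + 2 * n * (1 + logE 1) + 2) *
      logE (c - r) := by
  set m := logE (c - r)
  set K := Real.exp 1 + 4 / v ^ 2 + 2 * (1 + logE 2) / v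
  have hc : 1 ≤ c := (one_lt_one_div hr hr1).le.trans hrc
  have hm : 1 ≤ m := one_le_logE (by linarith)
  have hK0 : 0 ≤ K := by
    have : 0 ≤ 2 * (1 + logE 2) / v := div_nonneg (by linarith [logE_nonneg zero_le_two]) hv.le
    have : 0 ≤ 4 / v ^ 2 := by positivity
    linarith [Real.exp_pos 1]
  have hK : 0 ≤ logE K := logE_nonneg hK0
  have hmc : 0 ≤ m * c ^ (2 * n) := by positivity
  -- `c ≤ (c - r) + 1`, so the factor `c ^ (2 n)` costs only `O(n m)` on the logarithmic scale
  have hlogc : logE c ≤ m + logE 1 :=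
    (logE_le_logE (by linarith) (by linarith)).trans (logE_add_le (by linarith) zero_le_one)
  calc logE u ≤ logE (K * (m * c ^ (2 * n))) :=
        logE_le_logE hu (le_mul_of_far_small_ball n hv hr hr1 hrc hu h)
    _ ≤ logE K + (logE m + logE (c ^ (2 * n))) := by
        grw [logE_mul_le hK0 hmc, logE_mul_le (by linarith) (by positivity)]
    _ ≤ logE K + ((1 + m) + 2 * n * (m + logE 1)) := by
        gcongr
        · exact logE_le_one_add (by linarith)
        · calc logE (c ^ (2 * n)) ≤ ↑(2 * n) * logE c := logE_pow_le (by linarith) (by omega)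
            _ ≤ 2 * n * (m + logE 1) := by push_cast; gcongr
    _ ≤ _ := by
        have h1 : 0 ≤ (n : ℝ) * logE 1 := mul_nonneg (Nat.cast_nonneg n) (logE_nonneg zero_le_one)
        nlinarith [mul_nonneg hK (sub_nonneg.2 hm), mul_nonneg h1 (sub_nonneg.2 hm)]

lemma exists_logE_le_of_mul_le_logE_add {n : ℕ} (hn : 1 ≤ n) {v : ℝ} (hv : 0 < v) :
    ∃ K : ℝ, 0 ≤ K ∧ ∀ c r u : ℝ, 0 ≤ c → 0 < r → 0 ≤ u → ((r < 1 ∧ 1 / r ≤ c) ∨ 1 ≤ r) →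
      u * (r ^ n * v) ≤ logE u + logE (c + r) → logE u ≤ K * logE (max (c - r) 0) := by
  set K₁ := logE (Real.exp 1 + 4 / v ^ 2 + 2 * (1 + logE 2) / v) + 2 * n * (1 + logE 1) + 2
  set K₂ := logE (Real.exp 1 + 4 / v ^ 2 + 8 / v) + 2
  have hK₁ : 0 ≤ K₁ := by
    have := logE_nonneg (zero_le_one (α := ℝ))
    have : 0 ≤ logE (Real.exp 1 + 4 / v ^ 2 + 2 * (1 + logE 2) / v) :=
      logE_nonneg (by have := logE_nonneg (zero_le_two (α := ℝ)); positivity)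
    positivity
  have hK₂ : 0 ≤ K₂ := add_nonneg (logE_nonneg (by positivity)) zero_le_two
  refine ⟨K₁ + K₂, add_nonneg hK₁ hK₂, fun c r u hc hr hu hball h => ?_⟩
  have hm := logE_nonneg (le_max_right (c - r) 0)
  rcases hball with ⟨hr1, hrc⟩ | hr1
  · have hcr : max (c - r) 0 = c - r :=
      max_eq_left (by linarith [(one_lt_one_div hr hr1).trans_le hrc])
    have := logE_le_of_far_small_ball hn hv hr hr1 hrc hu h
    rw [← hcr] at this
    nlinarith
  · have := logE_le_of_one_le_radius hn hv hc hr1 hu h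
    nlinarith

lemma logE_norm_le_of_mem_ball {E : Type*} [SeminormedAddCommGroup E] {c x : E} {r : ℝ}
    (hx : x ∈ Metric.ball c r) : logE ‖x‖ ≤ logE (‖c‖ + r) := by
  refine logE_le_logE (norm_nonneg x) ?_
  have := norm_le_norm_add_norm_sub' x c
  rw [mem_ball_iff_norm] at hx
  linarith

lemma logE_le_norm_of_mem_ball {E : Type*} [SeminormedAddCommGroup E] {c x : E} {r : ℝ}
    (hx : x ∈ Metric.ball c r) : logE (max (‖c‖ - r) 0) ≤ logE ‖x‖ := by
  refine logE_le_logE (le_max_right _ _) (max_le ?_ (norm_nonneg x))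
  have := norm_le_norm_add_norm_sub' c x
  rw [mem_ball_iff_norm'] at hx
  linarith

section LuxemburgNorm

variable {n : ℕ} {B : Set (Rn n)}

lemma Phi_one (x : Rn n) (t : ℝ) : Phi n 1 x t = t / (logE t + logE ‖x‖) := by
  rw [Phi, if_pos ⟨0, by norm_num⟩]
  norm_num [logE]

lemma PhiE_one_of_ne_top (x : Rn n) {t : ℝ≥0∞} (ht : t ≠ ⊤) :
    PhiE n 1 x t = ENNReal.ofReal (t.toReal / (logE t.toReal + logE ‖x‖)) := by
  rw [PhiE, if_neg ht, Phi_one]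

lemma w1Norm_chi (hB : MeasurableSet B) :
    w1Norm n (chi n B) = ∫⁻ x in B, ENNReal.ofReal (logE ‖x‖)⁻¹ := by
  rw [w1Norm, ← lintegral_indicator hB]
  congr 1 with x
  by_cases hx : x ∈ B <;> simp [chi, hx, Wp, logE]

lemma lintegral_PhiE_chi_div (hB : MeasurableSet B) (lam : ℝ≥0∞) :
    ∫⁻ x, PhiE n 1 x (chi n B x / lam) = ∫⁻ x in B, PhiE n 1 x lam⁻¹ := by
  rw [← lintegral_indicator hB]
  congr 1 with x
  by_cases hx : x ∈ B <;> simp [chi, hx, PhiE, Phi_one]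

lemma w1Norm_chi_le_volume (hB : MeasurableSet B) :
    w1Norm n (chi n B) ≤ volume B := by
  rw [w1Norm_chi hB, ← setLIntegral_one]
  refine setLIntegral_mono' hB fun x _ => ?_
  rw [ENNReal.ofReal_le_one]
  exact inv_le_one_of_one_le₀ (one_le_logE (norm_nonneg x))

lemma w1Norm_chi_ne_zero (hB : MeasurableSet B) (hB0 : volume B ≠ 0) :
    w1Norm n (chi n B) ≠ 0 := by
  rw [w1Norm_chi hB, ← pos_iff_ne_zero, setLIntegral_pos_iff (by unfold logE; fun_prop)]
  convert pos_iff_ne_zero.2 hB0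
  refine Set.inter_eq_right.2 fun x _ => ?_
  simp [(one_le_logE (norm_nonneg x)).trans_lt' zero_lt_one]

lemma luxPhiNorm_chi_le_w1Norm (hB : MeasurableSet B) (hB0 : volume B ≠ 0)
    (hBtop : volume B ≠ ⊤) : luxPhiNorm n 1 (chi n B) ≤ w1Norm n (chi n B) := by
  set I := w1Norm n (chi n B)
  have hI0 : I ≠ 0 := w1Norm_chi_ne_zero hB hB0
  have hItop : I ≠ ⊤ := ne_top_of_le_ne_top hBtop (w1Norm_chi_le_volume hB)
  refine sInf_le ⟨pos_iff_ne_zero.2 hI0, ?_⟩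
  rw [lintegral_PhiE_chi_div hB]
  calc ∫⁻ x in B, PhiE n 1 x I⁻¹ ≤ ∫⁻ x in B, I⁻¹ * ENNReal.ofReal (logE ‖x‖)⁻¹ := by
        refine setLIntegral_mono' hB fun x _ => ?_
        rw [PhiE_one_of_ne_top x (ENNReal.inv_ne_top.2 hI0),
          ← ENNReal.ofReal_toReal (ENNReal.inv_ne_top.2 hI0), ← ENNReal.ofReal_mul (by positivity),
          ENNReal.toReal_ofReal (by positivity)]
        refine ENNReal.ofReal_le_ofReal ?_
        rw [← div_eq_mul_inv]
        gcongr
        · exact (one_le_logE (norm_nonneg x)).trans_lt' zero_lt_one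
        · exact le_add_of_nonneg_left (logE_nonneg ENNReal.toReal_nonneg)
    _ = I⁻¹ * I := by rw [lintegral_const_mul' _ _ (ENNReal.inv_ne_top.2 hI0), ← w1Norm_chi hB]
    _ = 1 := ENNReal.inv_mul_cancel hI0 hItop

lemma mul_toReal_volume_le_of_lintegral_PhiE_le_one (hB : MeasurableSet B)
    (hBtop : volume B ≠ ⊤) {M : ℝ} (hM0 : 0 ≤ M) (hM : ∀ x ∈ B, logE ‖x‖ ≤ M) {t : ℝ≥0∞}
    (ht : t ≠ ⊤) (h : ∫⁻ x in B, PhiE n 1 x t ≤ 1) :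
    t.toReal * (volume B).toReal ≤ logE t.toReal + M := by
  have hden : 0 < logE t.toReal + M := by linarith [one_le_logE (ENNReal.toReal_nonneg (a := t))]
  have hconst : ENNReal.ofReal (t.toReal / (logE t.toReal + M)) * volume B ≤ 1 := by
    rw [← setLIntegral_const]
    refine (setLIntegral_mono' hB fun x hx => ?_).trans h
    rw [PhiE_one_of_ne_top x ht]
    refine ENNReal.ofReal_le_ofReal (div_le_div_of_nonneg_left ENNReal.toReal_nonneg ?_ ?_)
    · linarith [one_le_logE (ENNReal.toReal_nonneg (a := t)), one_le_logE (norm_nonneg x)]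
    · linarith [hM x hx]
  rw [← ENNReal.ofReal_toReal hBtop, ← ENNReal.ofReal_mul (by positivity),
    ENNReal.ofReal_le_one, div_mul_eq_mul_div, div_le_one hden] at hconst
  exact hconst

lemma mul_w1Norm_chi_le_of_lintegral_PhiE_le_one (hB : MeasurableSet B) {K : ℝ} (hK : 0 ≤ K)
    {t : ℝ≥0∞} (ht : t ≠ ⊤) (h : ∫⁻ x in B, PhiE n 1 x t ≤ 1)
    (hlog : ∀ x ∈ B, logE t.toReal ≤ K * logE ‖x‖) :
    t * w1Norm n (chi n B) ≤ ENNReal.ofReal (K + 1) := by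
  rw [w1Norm_chi hB, ← lintegral_const_mul' _ _ ht]
  calc ∫⁻ x in B, t * ENNReal.ofReal (logE ‖x‖)⁻¹
      ≤ ∫⁻ x in B, ENNReal.ofReal (K + 1) * PhiE n 1 x t := by
        refine setLIntegral_mono' hB fun x hx => ?_
        have hL := one_le_logE (norm_nonneg x)
        have hu := logE_nonneg (ENNReal.toReal_nonneg (a := t))
        rw [PhiE_one_of_ne_top x ht, ← ENNReal.ofReal_toReal ht, ← ENNReal.ofReal_mul (by positivity),
          ← ENNReal.ofReal_mul (by positivity), ENNReal.toReal_ofReal ENNReal.toReal_nonneg]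
        refine ENNReal.ofReal_le_ofReal ?_
        rw [mul_div_assoc', le_div_iff₀ (by positivity), ← div_eq_mul_inv, div_mul_eq_mul_div,
          div_le_iff₀ (by positivity)]
        have := hlog x hx
        have := ENNReal.toReal_nonneg (a := t)
        nlinarith
    _ = ENNReal.ofReal (K + 1) * ∫⁻ x in B, PhiE n 1 x t :=
        lintegral_const_mul' _ _ ENNReal.ofReal_ne_top
    _ ≤ ENNReal.ofReal (K + 1) := mul_le_of_le_one_right' h

end LuxemburgNorm

lemma ofReal_inv_mul_w1Norm_le_luxPhiNorm_ball {n : ℕ} {c : Rn n} {r K : ℝ} (hr : 0 < r)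
    (hK : 0 ≤ K)
    (hscalar : ∀ u : ℝ, 0 ≤ u → u * (volume (Metric.ball c r)).toReal ≤ logE u + logE (‖c‖ + r) →
      logE u ≤ K * logE (max (‖c‖ - r) 0)) :
    ENNReal.ofReal (K + 1)⁻¹ * w1Norm n (chi n (Metric.ball c r)) ≤
      luxPhiNorm n 1 (chi n (Metric.ball c r)) := by
  refine le_sInf fun lam ⟨hlam0, hlam⟩ => ?_
  rcases eq_or_ne lam ⊤ with rfl | hlamtop
  · exact le_top
  rw [lintegral_PhiE_chi_div measurableSet_ball] at hlam
  have ht : lam⁻¹ ≠ ⊤ := ENNReal.inv_ne_top.2 hlam0.ne'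
  have hvol := mul_toReal_volume_le_of_lintegral_PhiE_le_one measurableSet_ball
    measure_ball_lt_top.ne (logE_nonneg (by positivity)) (fun _ => logE_norm_le_of_mem_ball) ht hlam
  have hI := mul_w1Norm_chi_le_of_lintegral_PhiE_le_one measurableSet_ball hK ht hlam
    fun x hx => (hscalar _ ENNReal.toReal_nonneg hvol).trans
      (mul_le_mul_of_nonneg_left (logE_le_norm_of_mem_ball hx) hK)
  have hA : ENNReal.ofReal (K + 1) ≠ 0 := (ENNReal.ofReal_pos.2 (by linarith)).ne'
  rw [ENNReal.ofReal_inv_of_pos (by linarith)]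
  calc (ENNReal.ofReal (K + 1))⁻¹ * w1Norm n (chi n (Metric.ball c r))
      = (ENNReal.ofReal (K + 1))⁻¹ * (lam * (lam⁻¹ * w1Norm n (chi n (Metric.ball c r)))) := by
        rw [← mul_assoc lam, ENNReal.mul_inv_cancel hlam0.ne' hlamtop, one_mul]
    _ ≤ (ENNReal.ofReal (K + 1))⁻¹ * (lam * ENNReal.ofReal (K + 1)) := by gcongr
    _ = lam := by
        rw [mul_comm lam, ← mul_assoc, ENNReal.inv_mul_cancel hA ENNReal.ofReal_ne_top, one_mul]

lemma IsAtom'.const_inv_mul {n s : ℕ} {N N' : ℝ≥0∞} {B : Set (Rn n)} {a : Rn n → ℂ} {C : ℝ}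
    (hC : 0 < C) (hN : ENNReal.ofReal C⁻¹ * N' ≤ N) (ha : IsAtom' n s N B a) :
    IsAtom' n s N' B (fun x => (C : ℂ)⁻¹ * a x) := by
  obtain ⟨hmeas, hsupp, hbound, hmom⟩ := ha
  have hC0 : ENNReal.ofReal C⁻¹ ≠ 0 := (ENNReal.ofReal_pos.2 (inv_pos.2 hC)).ne'
  refine ⟨hmeas.const_mul _, fun x hx => by simp [hsupp x hx], ?_, fun α hα => ?_⟩
  · filter_upwards [hbound] with x hx
    calc (‖(C : ℂ)⁻¹ * a x‖₊ : ℝ≥0∞) = ENNReal.ofReal C⁻¹ * ‖a x‖₊ := by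
          rw [nnnorm_mul, ENNReal.coe_mul, ← Complex.ofReal_inv, Complex.nnnorm_real,
            Real.nnnorm_of_nonneg (inv_nonneg.2 hC.le), ENNReal.ofReal,
            Real.toNNReal_of_nonneg (inv_nonneg.2 hC.le)]
      _ ≤ ENNReal.ofReal C⁻¹ * (ENNReal.ofReal C⁻¹ * N')⁻¹ :=
          mul_le_mul_right (hx.trans (ENNReal.inv_le_inv.2 hN)) _
      _ = N'⁻¹ := by
          rw [ENNReal.mul_inv (Or.inl hC0) (Or.inl ENNReal.ofReal_ne_top), ← mul_assoc,
            ENNReal.mul_inv_cancel hC0 ENNReal.ofReal_ne_top, one_mul]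
  · simp only [mul_assoc]
    rw [integral_const_mul, hmom α hα, mul_zero]

lemma toReal_volume_ball {n : ℕ} (c : Rn n) {r : ℝ} (hr : 0 < r) :
    (volume (Metric.ball c r)).toReal = r ^ n * (volume (Metric.ball (0 : Rn n) 1)).toReal := by
  rw [Measure.addHaar_ball_of_pos volume c hr, finrank_euclideanSpace_fin, ENNReal.toReal_mul,
    ENNReal.toReal_ofReal (by positivity)]

/-- For balls with `r_B < 1 ≤ |c_B| r_B`, or `r_B ≥ 1`,
`‖χ_B‖_{L^{Φ_1}} ∼ ‖χ_B‖_{L^1_{W_1}}`; consequently every `(Φ_1,∞,s)`-atom on such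
a ball is, up to a uniform constant, a `(1,∞,s)_{W_1}`-atom. -/
theorem statement12 (n s : ℕ) (hn : 1 ≤ n) :
    ∃ C : ℝ, 1 ≤ C ∧ ∀ (c : Rn n) (r : ℝ), 0 < r →
      ((r < 1 ∧ 1 / r ≤ ‖c‖) ∨ 1 ≤ r) →
      (ENNReal.ofReal C⁻¹ * w1Norm n (chi n (Metric.ball c r)) ≤
          luxPhiNorm n 1 (chi n (Metric.ball c r)) ∧
        luxPhiNorm n 1 (chi n (Metric.ball c r)) ≤
          ENNReal.ofReal C * w1Norm n (chi n (Metric.ball c r))) ∧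
      ∀ a : Rn n → ℂ,
        IsAtom' n s (luxPhiNorm n 1 (chi n (Metric.ball c r))) (Metric.ball c r) a →
        IsAtom' n s (w1Norm n (chi n (Metric.ball c r))) (Metric.ball c r)
          (fun x => (C : ℂ)⁻¹ * a x) := by
  have hv : 0 < (volume (Metric.ball (0 : Rn n) 1)).toReal :=
    ENNReal.toReal_pos (Metric.measure_ball_pos _ _ one_pos).ne' measure_ball_lt_top.ne
  obtain ⟨K, hK0, hK⟩ := exists_logE_le_of_mul_le_logE_add hn hv
  refine ⟨K + 1, by linarith, fun c r hr hball => ?_⟩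
  have hlow := ofReal_inv_mul_w1Norm_le_luxPhiNorm_ball hr hK0 fun u hu h =>
    hK ‖c‖ r u (norm_nonneg c) hr hu hball (by rwa [toReal_volume_ball c hr] at h)
  refine ⟨⟨hlow, ?_⟩, fun a ha => ha.const_inv_mul (by linarith) hlow⟩
  calc luxPhiNorm n 1 (chi n (Metric.ball c r)) ≤ w1Norm n (chi n (Metric.ball c r)) :=
        luxPhiNorm_chi_le_w1Norm measurableSet_ball (Metric.measure_ball_pos _ _ hr).ne'
          measure_ball_lt_top.ne
    _ ≤ ENNReal.ofReal (K + 1) * w1Norm n (chi n (Metric.ball c r)) :=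
        le_mul_of_one_le_left bot_le (ENNReal.one_le_ofReal.2 (by linarith))
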